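/- Let G be a finite simple graph, and let x, y be adjacent vertices with x ∈ ker(G) and y ∈ N(ker(G)). Then there exists a matching f from N(ker(G)) into ker(G) with f(y) = x, i.e., every edge between ker(G) and N(ker(G)) belongs to some matching from N(ker(G)) into ker(G). -/

import Mathlib

/-!
The kernel `K = ker(G)` is itself critical independent, because `d` is supermodular and so
the critical independent sets are closed under intersection. Take `B ⊆ N(K)`. The set
`K \ N(B)` is independent and its neighbourhood misses `B`, so criticality of `K` gives
`|B| ≤ |K ∩ N(B)|`; in the case of equality `K \ N(B)` is critical as well, hence contains `x`,
i.e. `x ∉ N(B)`. Either way `|B| ≤ |(K \ {x}) ∩ N(B)|`, so Hall's theorem matches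
`N(K) \ {y}` into `K \ {x}`, and sending `y` to `x` completes the matching.
-/

open Finset

namespace CritGraph

variable {V : Type*} [Fintype V] [DecidableEq V]

/-- The neighborhood of a set of vertices `X`:
all vertices having at least one neighbor in `X`. -/
def nbhd (G : SimpleGraph V) [DecidableRel G.Adj] (X : Finset V) : Finset V :=
  univ.filter fun v => ∃ x ∈ X, G.Adj v x

/-- The difference `d(X) = |X| - |N(X)|` of a set of vertices `X`. -/
def diff (G : SimpleGraph V) [DecidableRel G.Adj] (X : Finset V) : ℤ :=
  (X.card : ℤ) - ((nbhd G X).card : ℤ)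

/-- A set of vertices is independent if no two of its vertices are adjacent. -/
def IsIndep (G : SimpleGraph V) (S : Finset V) : Prop :=
  ∀ u ∈ S, ∀ v ∈ S, ¬ G.Adj u v

instance (G : SimpleGraph V) [DecidableRel G.Adj] : DecidablePred (IsIndep G) := fun S =>
  inferInstanceAs (Decidable (∀ u ∈ S, ∀ v ∈ S, ¬ G.Adj u v))

/-- The critical difference `d_c(G) = max {d(X) : X ⊆ V}`. -/
def dC (G : SimpleGraph V) [DecidableRel G.Adj] : ℤ :=
  (univ : Finset V).powerset.sup' (Finset.powerset_nonempty _) (diff G)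

/-- The critical independence difference `id_c(G) = max {d(I) : I independent}`. -/
def idC (G : SimpleGraph V) [DecidableRel G.Adj] : ℤ :=
  ((univ : Finset V).powerset.filter (IsIndep G)).sup'
    ⟨∅, by simp [IsIndep]⟩ (diff G)

/-- `A` is a critical independent set: `A` is independent and
`d(A) = max {d(I) : I independent}`. -/
def IsCritIndep (G : SimpleGraph V) [DecidableRel G.Adj] (A : Finset V) : Prop :=
  IsIndep G A ∧ ∀ I : Finset V, IsIndep G I → diff G I ≤ diff G A

instance (G : SimpleGraph V) [DecidableRel G.Adj] : DecidablePred (IsCritIndep G) := fun A =>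
  inferInstanceAs (Decidable (IsIndep G A ∧ ∀ I : Finset V, IsIndep G I → diff G I ≤ diff G A))

/-- `ker(G)`: the intersection of all critical independent sets of `G`. -/
def kerG (G : SimpleGraph V) [DecidableRel G.Adj] : Finset V :=
  univ.filter fun v => ∀ A : Finset V, IsCritIndep G A → v ∈ A

/-- `G - v`: the induced subgraph of `G` on `V \ {v}`. -/
def deleteVert (G : SimpleGraph V) (v : V) : SimpleGraph {u : V // u ≠ v} :=
  G.comap Subtype.val

instance (G : SimpleGraph V) (v : V) [DecidableRel G.Adj] :
    DecidableRel (deleteVert G v).Adj := fun a b =>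
  inferInstanceAs (Decidable (G.Adj a.val b.val))

/-- `S` is an inclusion-minimal independent set with positive difference. -/
def MinPosIndep (G : SimpleGraph V) [DecidableRel G.Adj] (S : Finset V) : Prop :=
  IsIndep G S ∧ 0 < diff G S ∧ ∀ S' ⊂ S, ¬ (IsIndep G S' ∧ 0 < diff G S')

/-- `S` is a maximum independent set. -/
def IsMaxIndep (G : SimpleGraph V) (S : Finset V) : Prop :=
  IsIndep G S ∧ ∀ I : Finset V, IsIndep G I → I.card ≤ S.card

instance (G : SimpleGraph V) [DecidableRel G.Adj] : DecidablePred (IsMaxIndep G) := fun S =>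
  inferInstanceAs (Decidable (IsIndep G S ∧ ∀ I : Finset V, IsIndep G I → I.card ≤ S.card))

/-- `core(G)`: the intersection of all maximum independent sets of `G`. -/
def coreG (G : SimpleGraph V) [DecidableRel G.Adj] : Finset V :=
  univ.filter fun v => ∀ A : Finset V, IsMaxIndep G A → v ∈ A

theorem _root_.Set.InjOn.update_insert {α β : Type*} [DecidableEq α] {f : α → β} {s : Set α}
    {a : α} {b : β} (hf : Set.InjOn f s) (ha : a ∉ s) (hb : b ∉ f '' s) :
    Set.InjOn (Function.update f a b) (insert a s) := by
  have hagree : Set.EqOn (Function.update f a b) f s := fun u hu =>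
    Function.update_of_ne (ne_of_mem_of_not_mem hu ha) _ _
  rw [Set.injOn_insert ha, hagree.image_eq, Function.update_self]
  exact ⟨hf.congr hagree.symm, hb⟩

variable {G : SimpleGraph V} [DecidableRel G.Adj]

omit [DecidableEq V] in
theorem mem_nbhd {X : Finset V} {v : V} : v ∈ nbhd G X ↔ ∃ x ∈ X, G.Adj v x := by
  simp [nbhd]

omit [DecidableEq V] in
theorem nbhd_mono {X Y : Finset V} (h : X ⊆ Y) : nbhd G X ⊆ nbhd G Y := fun _ hv =>
  let ⟨a, ha, hadj⟩ := mem_nbhd.1 hv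
  mem_nbhd.2 ⟨a, h ha, hadj⟩

theorem nbhd_union (X Y : Finset V) : nbhd G (X ∪ Y) = nbhd G X ∪ nbhd G Y := by
  ext v
  simp only [mem_nbhd, mem_union, or_and_right, exists_or]

omit [Fintype V] [DecidableEq V] [DecidableRel G.Adj] in
theorem IsIndep.mono {S T : Finset V} (hT : IsIndep G T) (h : S ⊆ T) : IsIndep G S :=
  fun u hu v hv => hT u (h hu) v (h hv)

theorem isIndep_sdiff_nbhd (X : Finset V) : IsIndep G (X \ nbhd G X) := by
  intro u hu v hv hadj
  exact (mem_sdiff.1 hu).2 (mem_nbhd.2 ⟨v, (mem_sdiff.1 hv).1, hadj⟩)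

theorem nbhd_sdiff_nbhd_subset_sdiff (A B : Finset V) :
    nbhd G (A \ nbhd G B) ⊆ nbhd G A \ B := by
  intro v hv
  obtain ⟨a, ha, hadj⟩ := mem_nbhd.1 hv
  rw [mem_sdiff] at ha ⊢
  exact ⟨mem_nbhd.2 ⟨a, ha.1, hadj⟩, fun hvB => ha.2 (mem_nbhd.2 ⟨v, hvB, hadj.symm⟩)⟩

theorem diff_le_diff_sdiff_nbhd (X : Finset V) : diff G X ≤ diff G (X \ nbhd G X) := by
  have hN := card_le_card (nbhd_sdiff_nbhd_subset_sdiff (G := G) X X)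
  rw [card_sdiff] at hN
  have h₁ := card_le_card (inter_subset_left : X ∩ nbhd G X ⊆ X)
  have h₂ := card_le_card (inter_subset_right : X ∩ nbhd G X ⊆ nbhd G X)
  rw [diff, diff, card_sdiff, inter_comm (nbhd G X)]
  omega

theorem IsCritIndep.diff_le {A : Finset V} (hA : IsCritIndep G A) (X : Finset V) :
    diff G X ≤ diff G A :=
  (diff_le_diff_sdiff_nbhd X).trans (hA.2 _ (isIndep_sdiff_nbhd X))

theorem diff_add_diff_le (A B : Finset V) :
    diff G A + diff G B ≤ diff G (A ∩ B) + diff G (A ∪ B) := by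
  have hcard := card_inter_add_card_union A B
  have hN := card_inter_add_card_union (nbhd G A) (nbhd G B)
  have hNinter : nbhd G (A ∩ B) ⊆ nbhd G A ∩ nbhd G B :=
    subset_inter (nbhd_mono inter_subset_left) (nbhd_mono inter_subset_right)
  have := card_le_card hNinter
  rw [diff, diff, diff, diff, nbhd_union]
  omega

theorem IsCritIndep.inter {A B : Finset V} (hA : IsCritIndep G A) (hB : IsCritIndep G B) :
    IsCritIndep G (A ∩ B) := by
  refine ⟨hA.1.mono inter_subset_left, fun I hI => ?_⟩
  have := diff_add_diff_le (G := G) A B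
  have := hA.diff_le (A ∪ B)
  have := hB.2 I hI
  omega

theorem exists_isCritIndep : ∃ A : Finset V, IsCritIndep G A := by
  obtain ⟨A, hA, hmax⟩ := exists_max_image (univ.filter (IsIndep G)) (diff G)
    ⟨∅, by simp [IsIndep]⟩
  exact ⟨A, (mem_filter.1 hA).2, fun I hI => hmax I (mem_filter.2 ⟨mem_univ I, hI⟩)⟩

theorem isCritIndep_kerG : IsCritIndep G (kerG G) := by
  obtain ⟨A₀, hA₀, hmin⟩ := exists_min_image (univ.filter (IsCritIndep G)) card
    (exists_isCritIndep.imp fun A hA => mem_filter.2 ⟨mem_univ A, hA⟩)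
  rw [mem_filter] at hA₀
  -- a critical set of least size lies inside every critical set, hence equals the kernel
  have hsub : ∀ B, IsCritIndep G B → A₀ ⊆ B := fun B hB =>
    have hAB := hA₀.2.inter hB
    (eq_of_subset_of_card_le inter_subset_left
      (hmin _ (mem_filter.2 ⟨mem_univ _, hAB⟩))).symm.subset.trans inter_subset_right
  have hK : kerG G = A₀ := by
    ext v
    simp only [kerG, mem_filter, mem_univ, true_and]
    exact ⟨fun hv => hv A₀ hA₀.2, fun hv B hB => hsub B hB hv⟩
  exact hK ▸ hA₀.2

theorem diff_add_card_le_diff_sdiff_nbhd {A B : Finset V} (hB : B ⊆ nbhd G A) :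
    diff G A + #B - #(A ∩ nbhd G B) ≤ diff G (A \ nbhd G B) := by
  have hN := card_le_card (nbhd_sdiff_nbhd_subset_sdiff (G := G) A B)
  rw [card_sdiff_of_subset hB] at hN
  have := card_le_card hB
  have := card_le_card (inter_subset_left : A ∩ nbhd G B ⊆ A)
  rw [diff, diff, card_sdiff, inter_comm (nbhd G B)]
  omega

theorem card_le_card_erase_inter_nbhd {x : V} (hx : x ∈ kerG G) {B : Finset V}
    (hB : B ⊆ nbhd G (kerG G)) : #B ≤ #((kerG G).erase x ∩ nbhd G B) := by
  have hK := isCritIndep_kerG (G := G)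
  have hlower := diff_add_card_le_diff_sdiff_nbhd hB
  have hindep : IsIndep G (kerG G \ nbhd G B) := hK.1.mono sdiff_subset
  have hupper := hK.2 _ hindep
  rw [erase_inter]
  by_cases hxB : x ∈ nbhd G B
  · have hlt : #B < #(kerG G ∩ nbhd G B) := by
      by_contra! hle
      have hcrit : IsCritIndep G (kerG G \ nbhd G B) :=
        ⟨hindep, fun I hI => (hK.2 I hI).trans (by omega)⟩
      exact (mem_sdiff.1 ((mem_filter.1 hx).2 _ hcrit)).2 hxB
    rw [card_erase_of_mem (mem_inter.2 ⟨hx, hxB⟩)]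
    omega
  · rw [erase_eq_of_notMem (fun h => hxB (mem_inter.1 h).2)]
    omega

theorem exists_matching_of_hall {S T : Finset V}
    (hall : ∀ B ⊆ S, #B ≤ #(T ∩ nbhd G B)) :
    ∃ f : V → V, Set.InjOn f S ∧ ∀ u ∈ S, f u ∈ T ∧ G.Adj u (f u) := by
  obtain ⟨g, hg, hgT⟩ := (all_card_le_biUnion_card_iff_exists_injective
    fun u : S => T.filter (G.Adj u)).1 fun s => by
      calc #s = #(s.map (Function.Embedding.subtype _)) := (card_map _).symm
        _ ≤ #(T ∩ nbhd G (s.map (Function.Embedding.subtype _))) :=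
          hall _ fun v hv => by
            obtain ⟨u, -, rfl⟩ := mem_map.1 hv
            exact u.2
        _ ≤ #(s.biUnion fun u : S => T.filter (G.Adj u)) := card_le_card fun v hv => by
          obtain ⟨hvT, hvN⟩ := mem_inter.1 hv
          obtain ⟨_, hu, hadj⟩ := mem_nbhd.1 hvN
          obtain ⟨u, hus, rfl⟩ := mem_map.1 hu
          exact mem_biUnion.2 ⟨u, hus, mem_filter.2 ⟨hvT, hadj.symm⟩⟩
  refine ⟨fun u => if hu : u ∈ S then g ⟨u, hu⟩ else u, fun u hu v hv huv => ?_,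
    fun u hu => ?_⟩
  · simp only [mem_coe] at hu hv
    simp only [dif_pos hu, dif_pos hv] at huv
    exact congrArg Subtype.val (hg huv)
  · simpa only [dif_pos hu, mem_filter] using hgT ⟨u, hu⟩

/-- Every edge between `ker(G)` and `N(ker(G))` belongs to some matching from
`N(ker(G))` into `ker(G)`. -/
theorem exists_matching_containing_edge (G : SimpleGraph V) [DecidableRel G.Adj]
    (x y : V) (hxy : G.Adj x y) (hx : x ∈ kerG G) (hy : y ∈ nbhd G (kerG G)) :
    ∃ f : V → V, Set.InjOn f ↑(nbhd G (kerG G)) ∧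
      (∀ u ∈ nbhd G (kerG G), f u ∈ kerG G ∧ G.Adj u (f u)) ∧ f y = x := by
  obtain ⟨f, hf_inj, hf⟩ := exists_matching_of_hall (S := (nbhd G (kerG G)).erase y)
    (T := (kerG G).erase x) fun _ hB =>
      card_le_card_erase_inter_nbhd hx (hB.trans (erase_subset ..))
  refine ⟨Function.update f y x, ?_, fun u hu => ?_, Function.update_self _ _ _⟩
  · rw [← insert_erase hy, coe_insert]
    refine hf_inj.update_insert (by simp) ?_
    rintro ⟨u, hu, hux⟩
    exact (mem_erase.1 (hf u hu).1).1 hux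
  · by_cases huy : u = y
    · subst huy
      simpa using ⟨hx, hxy.symm⟩
    · rw [Function.update_of_ne huy]
      obtain ⟨hfu, hadj⟩ := hf u (mem_erase.2 ⟨huy, hu⟩)
      exact ⟨mem_of_mem_erase hfu, hadj⟩

end CritGraph
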